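/- arXiv:1503.06272 — 2 statements merged into one kernel-verified Lean document; each statement's English description precedes it below -/
import Mathlib

section
/- Let V be a finite-dimensional 𝔽₂-vector space with a symmetric bilinear form B satisfying B(v,v)=0 for all v, and let q : V → 𝔽₂ be a quadratic form with polarization B, i.e. q(x+y) = q(x)+q(y)+B(x,y). Suppose β ∈ V with q(β) = 0 and B(β, x) = 1 for some x ∈ V. Then the transvection T_β(v) = v + B(β,v)β does not belong to the subgroup of GL(V) generated by { T_c : c ∈ V, q(c) = 1 }. -/
/-- Humphries' lemma, linear-algebraic core: over 𝔽₂, if q is a quadratic form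
with alternating polarization B, and β satisfies q(β) = 0 and B(β,x) = 1 for
some x, then the transvection T_β is not in the subgroup of GL(V) generated by
the transvections T_c with q(c) = 1. -/
theorem stmt_9 {V : Type*} [AddCommGroup V] [Module (ZMod 2) V]
    [FiniteDimensional (ZMod 2) V]
    (B : V →ₗ[ZMod 2] V →ₗ[ZMod 2] ZMod 2)
    (hBsymm : ∀ x y : V, B x y = B y x)
    (hBalt : ∀ v : V, B v v = 0)
    (q : V → ZMod 2) (hq : ∀ x y : V, q (x + y) = q x + q y + B x y)
    (β : V) (hβ : q β = 0) (x : V) (hx : B β x = 1)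
    (Tβ : V ≃ₗ[ZMod 2] V) (hTβ : ∀ v : V, Tβ v = v + B β v • β) :
    Tβ ∉ Subgroup.closure
      {S : V ≃ₗ[ZMod 2] V | ∃ c : V, q c = 1 ∧ ∀ v : V, S v = v + B c v • c} := by
  set H : Subgroup (V ≃ₗ[ZMod 2] V) :=
    { carrier := {S | ∀ v : V, q (S v) = q v}
      one_mem' := fun v => rfl
      mul_mem' := by
        intro a b ha hb v
        have : (a * b) v = a (b v) := rfl
        rw [this, ha, hb]
      inv_mem' := by
        intro a ha v
        have h1 : a (a⁻¹ v) = v := by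
          have : (a * a⁻¹) v = v := by rw [mul_inv_cancel]; rfl
          exact this
        calc q (a⁻¹ v) = q (a (a⁻¹ v)) := (ha _).symm
          _ = q v := by rw [h1] } with hH
  have hle : Subgroup.closure
      {S : V ≃ₗ[ZMod 2] V | ∃ c : V, q c = 1 ∧ ∀ v : V, S v = v + B c v • c} ≤ H := by
    apply Subgroup.closure_le _ |>.2
    rintro S ⟨c, hc, hS⟩ v
    show q (S v) = q v
    rw [hS v]
    have h2 : ∀ a : ZMod 2, a = 0 ∨ a = 1 := by decide
    rcases h2 (B c v) with h | h
    · rw [h, zero_smul, add_zero]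
    · rw [h, one_smul, hq, hc, hBsymm v c, h, add_assoc,
        (by decide : (1:ZMod 2)+1 = 0), add_zero]
  intro hmem
  have := hle hmem x
  rw [hTβ x, hx, one_smul, hq, hβ, hBsymm x β, hx] at this
  simp at this
end

section
/- Let g ≥ 1 and let V = 𝔽₂^{4g+2} with basis a_1, b_1, …, a_{2g+1}, b_{2g+1}. Define B_{2i-1} = (a_i + a_{i+1} + ⋯ + a_{2g+2-i}) + b_i + b_{2g+2-i} and B_{2i} = B_{2i-1} + a_i + a_{2g+2-i} for 1 ≤ i ≤ g, and set e_i = a_i + a_{g+1}, f_i = b_i + b_{g+1}. Then any set ℬ consisting of B_1, …, B_{2g}, a_{g+1}, b_{g+1}, together with, for each 1 ≤ i ≤ g, one element of {a_i, e_i} and one element of {b_i, f_i}, is a basis of V. -/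
/-! The span of the new family contains a_{g+1}, b_{g+1}, and a_i, b_i for i ≤ g
(as e_i - a_{g+1}, f_i - b_{g+1} where needed). Since B_{2i} - B_{2i-1} = a_i + a_{2g+2-i},
it contains the remaining a_j; then B_{2i-1} yields the remaining b_j. So the 4g+2 vectors
span a space of dimension 4g+2. -/

open Submodule

theorem linearIndependent_and_span_eq_top_of_mem_span {K V ι κ : Type*} [DivisionRing K]
    [AddCommGroup V] [Module K V] [Fintype ι] [Fintype κ] {v : ι → V} {w : κ → V}
    (hv : LinearIndependent K v) (hv_span : span K (Set.range v) = ⊤)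
    (hcard : Fintype.card κ = Fintype.card ι) (hvw : ∀ i, v i ∈ span K (Set.range w)) :
    LinearIndependent K w ∧ span K (Set.range w) = ⊤ := by
  have hw_span : span K (Set.range w) = ⊤ :=
    eq_top_iff.2 <| hv_span.ge.trans <| span_le.2 <| Set.range_subset_iff.2 hvw
  have hrank : Module.finrank K V = Fintype.card ι := by
    rw [← finrank_top K V, ← hv_span, finrank_span_eq_card hv]
  exact ⟨linearIndependent_of_top_le_span_of_card_eq_finrank hw_span.ge (hcard.trans hrank.symm),
    hw_span⟩

theorem forall_of_reflect {g : ℕ} {P : ℕ → Prop} (hlow : ∀ i, 1 ≤ i → i ≤ g → P i)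
    (hmid : P (g + 1)) (hhigh : ∀ i, 1 ≤ i → i ≤ g → P (2 * g + 2 - i)) :
    ∀ j, 1 ≤ j → j ≤ 2 * g + 1 → P j := by
  intro j h1 h2
  rcases lt_trichotomy j (g + 1) with h | rfl | h
  · exact hlow j h1 (by omega)
  · exact hmid
  · simpa [show 2 * g + 2 - (2 * g + 2 - j) = j by omega]
      using hhigh (2 * g + 2 - j) (by omega) (by omega)

section

variable {R V : Type*} [Ring R] [AddCommGroup V] [Module R V] {S : Submodule R V}

theorem Submodule.mem_of_ite_add_mem {x y : V} (c : Bool) (hx : x ∈ S)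
    (h : (if c then y else y + x) ∈ S) : y ∈ S := by
  cases c
  · simpa using S.sub_mem h hx
  · simpa using h

variable {g : ℕ} {a b BB : ℕ → V}

theorem a_mem_of_cycles_mem
    (hBBeven : ∀ i, 1 ≤ i → i ≤ g →
      BB (2*i) = BB (2*i-1) + a i + a (2*g+2-i))
    (hBB : ∀ j, 1 ≤ j → j ≤ 2 * g → BB j ∈ S)
    (hlow : ∀ i, 1 ≤ i → i ≤ g → a i ∈ S)
    (hmid : a (g + 1) ∈ S) : ∀ j, 1 ≤ j → j ≤ 2 * g + 1 → a j ∈ S := by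
  refine forall_of_reflect hlow hmid fun i h1 h2 => ?_
  have h := S.sub_mem (S.sub_mem (hBB (2 * i) (by omega) (by omega))
    (hBB (2 * i - 1) (by omega) (by omega))) (hlow i h1 h2)
  convert h using 1
  rw [hBBeven i h1 h2]
  abel

theorem b_mem_of_cycles_mem
    (hBBodd : ∀ i, 1 ≤ i → i ≤ g →
      BB (2*i-1) = (∑ j ∈ Finset.Icc i (2*g+2-i), a j) + b i + b (2*g+2-i))
    (hBB : ∀ j, 1 ≤ j → j ≤ 2 * g → BB j ∈ S)
    (ha : ∀ j, 1 ≤ j → j ≤ 2 * g + 1 → a j ∈ S)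
    (hlow : ∀ i, 1 ≤ i → i ≤ g → b i ∈ S) (hmid : b (g + 1) ∈ S) :
    ∀ j, 1 ≤ j → j ≤ 2 * g + 1 → b j ∈ S := by
  refine forall_of_reflect hlow hmid fun i h1 h2 => ?_
  have hsum : ∑ j ∈ Finset.Icc i (2*g+2-i), a j ∈ S :=
    S.sum_mem fun j hj =>
      have := Finset.mem_Icc.1 hj
      ha j (by omega) (by omega)
  have h := S.sub_mem (S.sub_mem (hBB (2 * i - 1) (by omega) (by omega)) hsum) (hlow i h1 h2)
  convert h using 1
  rw [hBBodd i h1 h2]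
  abel

end

theorem stmt_11_general (g : ℕ) {V : Type*} [AddCommGroup V]
    [Module (ZMod 2) V] (a b : ℕ → V)
    (hindep : LinearIndependent (ZMod 2)
      (Sum.elim (fun i : Fin (2*g+1) => a ((i : ℕ)+1))
                (fun i : Fin (2*g+1) => b ((i : ℕ)+1))))
    (hspan : Submodule.span (ZMod 2)
      (Set.range (Sum.elim (fun i : Fin (2*g+1) => a ((i : ℕ)+1))
                           (fun i : Fin (2*g+1) => b ((i : ℕ)+1)))) = ⊤)
    (BB : ℕ → V)
    (hBBodd : ∀ i, 1 ≤ i → i ≤ g →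
      BB (2*i-1) = (∑ j ∈ Finset.Icc i (2*g+2-i), a j) + b i + b (2*g+2-i))
    (hBBeven : ∀ i, 1 ≤ i → i ≤ g →
      BB (2*i) = BB (2*i-1) + a i + a (2*g+2-i))
    (sa sb : ℕ → Bool) :
    let e : ℕ → V := fun i => a i + a (g+1)
    let f : ℕ → V := fun i => b i + b (g+1)
    let F : Fin (2*g) ⊕ Fin 2 ⊕ Fin g ⊕ Fin g → V :=
      Sum.elim (fun j : Fin (2*g) => BB ((j : ℕ)+1))
        (Sum.elim (fun j : Fin 2 => if j = 0 then a (g+1) else b (g+1))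
          (Sum.elim (fun i : Fin g => if sa ((i : ℕ)+1) then a ((i : ℕ)+1) else e ((i : ℕ)+1))
            (fun i : Fin g => if sb ((i : ℕ)+1) then b ((i : ℕ)+1) else f ((i : ℕ)+1))))
    LinearIndependent (ZMod 2) F ∧
      Submodule.span (ZMod 2) (Set.range F) = ⊤ := by
  intro e f F
  refine linearIndependent_and_span_eq_top_of_mem_span hindep hspan
    (by simp only [Fintype.card_sum, Fintype.card_fin]; omega) ?_
  have hF : ∀ x, F x ∈ span (ZMod 2) (Set.range F) := fun x => subset_span ⟨x, rfl⟩
  have hBB : ∀ j, 1 ≤ j → j ≤ 2 * g → BB j ∈ span (ZMod 2) (Set.range F) := fun j h1 h2 => by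
    simpa [F, Nat.sub_add_cancel h1] using hF (.inl ⟨j - 1, by omega⟩)
  have ha_mid : a (g + 1) ∈ span (ZMod 2) (Set.range F) := by
    simpa [F] using hF (.inr (.inl 0))
  have hb_mid : b (g + 1) ∈ span (ZMod 2) (Set.range F) := by
    simpa [F] using hF (.inr (.inl 1))
  have ha_low : ∀ i, 1 ≤ i → i ≤ g → a i ∈ span (ZMod 2) (Set.range F) := fun i h1 h2 =>
    mem_of_ite_add_mem (sa i) ha_mid <| by
      simpa [F, e, Nat.sub_add_cancel h1] using hF (.inr (.inr (.inl ⟨i - 1, by omega⟩)))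
  have hb_low : ∀ i, 1 ≤ i → i ≤ g → b i ∈ span (ZMod 2) (Set.range F) := fun i h1 h2 =>
    mem_of_ite_add_mem (sb i) hb_mid <| by
      simpa [F, f, Nat.sub_add_cancel h1] using hF (.inr (.inr (.inr ⟨i - 1, by omega⟩)))
  have ha := a_mem_of_cycles_mem hBBeven hBB ha_low ha_mid
  have hb := b_mem_of_cycles_mem hBBodd hBB ha hb_low hb_mid
  rintro (⟨i, hi⟩ | ⟨i, hi⟩)
  · exact ha (i + 1) (by omega) (by omega)
  · exact hb (i + 1) (by omega) (by omega)

/-- Lemma 3.3 (linear algebra content): in an 𝔽₂-vector space with basis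
a_1, b_1, …, a_{2g+1}, b_{2g+1}, with B_{2i-1}, B_{2i}, e_i, f_i as defined,
any set consisting of B_1, …, B_{2g}, a_{g+1}, b_{g+1} together with, for each
1 ≤ i ≤ g, one of {a_i, e_i} and one of {b_i, f_i}, is a basis. -/
theorem stmt_11 (g : ℕ) (hg : 1 ≤ g) {V : Type*} [AddCommGroup V]
    [Module (ZMod 2) V] (a b : ℕ → V)
    (hindep : LinearIndependent (ZMod 2)
      (Sum.elim (fun i : Fin (2*g+1) => a ((i : ℕ)+1))
                (fun i : Fin (2*g+1) => b ((i : ℕ)+1))))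
    (hspan : Submodule.span (ZMod 2)
      (Set.range (Sum.elim (fun i : Fin (2*g+1) => a ((i : ℕ)+1))
                           (fun i : Fin (2*g+1) => b ((i : ℕ)+1)))) = ⊤)
    (BB : ℕ → V)
    (hBBodd : ∀ i, 1 ≤ i → i ≤ g →
      BB (2*i-1) = (∑ j ∈ Finset.Icc i (2*g+2-i), a j) + b i + b (2*g+2-i))
    (hBBeven : ∀ i, 1 ≤ i → i ≤ g →
      BB (2*i) = BB (2*i-1) + a i + a (2*g+2-i))
    (sa sb : ℕ → Bool) :
    let e : ℕ → V := fun i => a i + a (g+1)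
    let f : ℕ → V := fun i => b i + b (g+1)
    let F : Fin (2*g) ⊕ Fin 2 ⊕ Fin g ⊕ Fin g → V :=
      Sum.elim (fun j : Fin (2*g) => BB ((j : ℕ)+1))
        (Sum.elim (fun j : Fin 2 => if j = 0 then a (g+1) else b (g+1))
          (Sum.elim (fun i : Fin g => if sa ((i : ℕ)+1) then a ((i : ℕ)+1) else e ((i : ℕ)+1))
            (fun i : Fin g => if sb ((i : ℕ)+1) then b ((i : ℕ)+1) else f ((i : ℕ)+1))))
    LinearIndependent (ZMod 2) F ∧
      Submodule.span (ZMod 2) (Set.range F) = ⊤ :=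
  stmt_11_general g a b hindep hspan BB hBBodd hBBeven sa sb
end
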